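/- arXiv:2103.13508 — 3 statements merged into one kernel-verified Lean document; each statement's English description precedes it below -/
import Mathlib

section
/- Let A > 0, B > 0, C ∈ ℝ, f(y) = (A·y·ln(B·y) + y + C)·e^y for y > 0, and let δ be the unique positive solution of A·(y+1)·ln(B·y) + y + A + C + 1 = 0. Then f restricted to [δ, ∞) is a strictly increasing bijection from [δ, ∞) onto [f(δ), ∞); in particular, for every x ≥ f(δ) there exists a unique y ≥ δ with (A·y·ln(B·y) + y + C)·e^y = x. -/
/-!
Writing `f(y) = (A·y·ln(B·y) + y + C)·e^y`, one has `f'(y) = e^y·g(y)` with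
`g(y) = A·(y+1)·ln(B·y) + y + A + C + 1`. As `g` has no zero in `(δ, ∞)` and is eventually
positive, the intermediate value theorem gives `g > 0` there. Hence `f` is strictly increasing
on `[δ, ∞)`, and as `f(y) → ∞` its image is all of `[f(δ), ∞)`.
-/

open Real Set Filter

theorem IsPreconnected.pos_of_forall_ne_zero {X : Type*} [TopologicalSpace X] {s : Set X}
    (hs : IsPreconnected s) {g : X → ℝ} (hg : ContinuousOn g s) (hne : ∀ y ∈ s, g y ≠ 0)
    {z : X} (hz : z ∈ s) (hgz : 0 < g z) {y : X} (hy : y ∈ s) : 0 < g y := by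
  by_contra! hgy
  obtain ⟨w, hw, hw0⟩ := hs.intermediate_value hy hz hg ⟨hgy, hgz.le⟩
  exact hne w hw hw0

namespace LogLambert

variable {A B C : ℝ}

noncomputable def f (A B C y : ℝ) : ℝ := (A * y * log (B * y) + y + C) * exp y

noncomputable def derivFactor (A B C y : ℝ) : ℝ := A * (y + 1) * log (B * y) + y + A + C + 1

theorem hasDerivAt_f (hB : B ≠ 0) {y : ℝ} (hy : y ≠ 0) :
    HasDerivAt (f A B C) (exp y * derivFactor A B C y) y := by
  have hBy : B * y ≠ 0 := mul_ne_zero hB hy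
  have hlog : HasDerivAt (fun y ↦ log (B * y)) (B * 1 / (B * y)) y :=
    ((hasDerivAt_id' y).const_mul B).log hBy
  have hpoly : HasDerivAt (fun y ↦ A * y * log (B * y) + y + C) (A * log (B * y) + A + 1) y :=
    (((((hasDerivAt_id' y).const_mul A).mul hlog).add (hasDerivAt_id' y)).add_const C).congr_deriv
      (by field_simp)
  exact (hpoly.mul (hasDerivAt_exp y)).congr_deriv (by rw [derivFactor]; ring)

theorem continuousOn_f (hB : B ≠ 0) : ContinuousOn (f A B C) (Ioi 0) := fun _ hy ↦
  (hasDerivAt_f hB (ne_of_gt hy)).continuousAt.continuousWithinAt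

theorem continuousOn_derivFactor (hB : B ≠ 0) : ContinuousOn (derivFactor A B C) (Ioi 0) := by
  unfold derivFactor
  fun_prop (disch := intro y hy; exact mul_ne_zero hB (ne_of_gt hy))

theorem eventually_pos_derivFactor (hA : 0 ≤ A) (hB : 0 < B) :
    ∀ᶠ y in atTop, 0 < derivFactor A B C y := by
  filter_upwards [eventually_ge_atTop (1 / B), eventually_gt_atTop (-(A + C + 1)),
    eventually_gt_atTop 0] with y hyB hyC hy
  have hlog : 0 ≤ log (B * y) := log_nonneg (by rwa [div_le_iff₀' hB] at hyB)
  have : 0 ≤ A * (y + 1) * log (B * y) := by positivity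
  unfold derivFactor
  linarith

theorem tendsto_f_atTop (hA : 0 ≤ A) (hB : 0 < B) : Tendsto (f A B C) atTop atTop := by
  refine tendsto_atTop_mono' _ ?_ (tendsto_atTop_add_const_right _ C tendsto_id)
  filter_upwards [eventually_ge_atTop (1 / B), eventually_ge_atTop (-C),
    eventually_gt_atTop 0] with y hyB hyC hy
  have hlog : 0 ≤ log (B * y) := log_nonneg (by rwa [div_le_iff₀' hB] at hyB)
  have : 0 ≤ A * y * log (B * y) := by positivity
  calc id y + C ≤ (A * y * log (B * y) + y + C) * 1 := by simp only [id]; linarith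
    _ ≤ f A B C y := mul_le_mul_of_nonneg_left (one_le_exp hy.le) (by linarith)

end LogLambert

open LogLambert

theorem branch_W1_bijection_general (A B C : ℝ) (hA : 0 < A) (hB : 0 < B) (δ : ℝ)
    (hδ : 0 < δ)
    (huniq : ∀ y : ℝ, 0 < y →
      A * (y + 1) * Real.log (B * y) + y + A + C + 1 = 0 → y = δ) :
    StrictMonoOn (fun y : ℝ => (A * y * Real.log (B * y) + y + C) * Real.exp y)
      (Set.Ici δ) ∧
    (fun y : ℝ => (A * y * Real.log (B * y) + y + C) * Real.exp y) '' Set.Ici δ =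
      Set.Ici ((A * δ * Real.log (B * δ) + δ + C) * Real.exp δ) ∧
    ∀ x : ℝ, (A * δ * Real.log (B * δ) + δ + C) * Real.exp δ ≤ x →
      ∃! y : ℝ, δ ≤ y ∧ (A * y * Real.log (B * y) + y + C) * Real.exp y = x := by
  have hIoi : Ioi δ ⊆ Ioi 0 := Ioi_subset_Ioi hδ.le
  have hcont : ContinuousOn (f A B C) (Ici δ) :=
    (continuousOn_f hB.ne').mono (Ici_subset_Ioi.2 hδ)
  have hpos : ∀ y ∈ Ioi δ, 0 < derivFactor A B C y := by
    obtain ⟨z, hgz, hz⟩ := ((eventually_pos_derivFactor hA.le hB).and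
      (eventually_gt_atTop δ)).exists
    refine fun y hy ↦ isPreconnected_Ioi.pos_of_forall_ne_zero
      ((continuousOn_derivFactor hB.ne').mono hIoi) (fun w hw hw0 ↦ ?_) hz hgz hy
    exact (ne_of_gt hw) (huniq w (hIoi hw) hw0)
  have hmono : StrictMonoOn (f A B C) (Ici δ) := by
    refine strictMonoOn_of_hasDerivWithinAt_pos (convex_Ici δ) hcont
      (fun y hy ↦ (hasDerivAt_f hB.ne' (ne_of_gt (hIoi ?_))).hasDerivWithinAt)
      (fun y hy ↦ mul_pos (exp_pos y) (hpos y ?_)) <;> rwa [interior_Ici] at hy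
  have himage : f A B C '' Ici δ = Ici (f A B C δ) :=
    hcont.image_Ici_of_monotoneOn hmono.monotoneOn (tendsto_f_atTop hA.le hB)
  refine ⟨hmono, himage, fun x hx ↦ ?_⟩
  obtain ⟨y, hy, rfl⟩ : x ∈ f A B C '' Ici δ := himage ▸ hx
  exact ⟨y, ⟨hy, rfl⟩, fun w ⟨hw, hwy⟩ ↦ hmono.injOn hw hy hwy⟩

/-- Let `A, B > 0` and `δ` the unique positive zero of
`A·(y+1)·ln(B·y) + y + A + C + 1`. Then `f(y) = (A·y·ln(B·y) + y + C)·e^y`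
restricted to `[δ, ∞)` is a strictly increasing bijection onto `[f(δ), ∞)`; in
particular, for every `x ≥ f(δ)` there is a unique `y ≥ δ` with `f(y) = x`. -/
theorem branch_W1_bijection (A B C : ℝ) (hA : 0 < A) (hB : 0 < B) (δ : ℝ)
    (hδ : 0 < δ) (hzero : A * (δ + 1) * Real.log (B * δ) + δ + A + C + 1 = 0)
    (huniq : ∀ y : ℝ, 0 < y →
      A * (y + 1) * Real.log (B * y) + y + A + C + 1 = 0 → y = δ) :
    StrictMonoOn (fun y : ℝ => (A * y * Real.log (B * y) + y + C) * Real.exp y)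
      (Set.Ici δ) ∧
    (fun y : ℝ => (A * y * Real.log (B * y) + y + C) * Real.exp y) '' Set.Ici δ =
      Set.Ici ((A * δ * Real.log (B * δ) + δ + C) * Real.exp δ) ∧
    ∀ x : ℝ, (A * δ * Real.log (B * δ) + δ + C) * Real.exp δ ≤ x →
      ∃! y : ℝ, δ ≤ y ∧ (A * y * Real.log (B * y) + y + C) * Real.exp y = x :=
  branch_W1_bijection_general A B C hA hB δ hδ huniq
end

section
/- Let A ≠ 0, B ≠ 0, C ∈ ℝ with -B·C·e^{1/A}/A in the domain of the principal Lambert W function and B·a > 0 where a = (1/B)·e^{W(-B·C·e^{1/A}/A) - 1/A}. Then f(a) = 0, where f(y) = (A·y·ln(B·y) + y + C)·e^y. That is, y = a solves A·y·ln(B·y) + y + C = 0. -/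
/-- Let `A ≠ 0`, `B ≠ 0`, and `W₀` a value of the Lambert W function at
`-B·C·e^(1/A)/A` (i.e. `W₀·e^(W₀) = -B·C·e^(1/A)/A`). If
`a = (1/B)·e^(W₀ - 1/A)` satisfies `B·a > 0`, then
`f(a) = (A·a·ln(B·a) + a + C)·e^a = 0`. -/
theorem zero_of_translated_log_lambert (A B C W₀ : ℝ) (hA : A ≠ 0) (hB : B ≠ 0)
    (hW : W₀ * Real.exp W₀ = -B * C * Real.exp (1 / A) / A)
    (a : ℝ) (ha : a = (1 / B) * Real.exp (W₀ - 1 / A)) (hBa : 0 < B * a) :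
    (A * a * Real.log (B * a) + a + C) * Real.exp a = 0 := by
  have hBa' : B * a = Real.exp (W₀ - 1 / A) := by
    rw [ha]; field_simp
  rw [hBa', Real.log_exp]
  have h1 : A * a * (W₀ - 1 / A) + a + C = A * a * W₀ + C := by
    field_simp; ring
  rw [h1]
  have h2 : A * a * W₀ = -C := by
    rw [ha]
    have : Real.exp (W₀ - 1 / A) = Real.exp W₀ * Real.exp (-(1/A)) := by
      rw [← Real.exp_add]; ring_nf
    rw [this]
    have hE : Real.exp (1/A) * Real.exp (-(1/A)) = 1 := by
      rw [← Real.exp_add]; simp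
    have h3 : A * (1 / B * (Real.exp W₀ * Real.exp (-(1/A)))) * W₀
        = (A / B) * (W₀ * Real.exp W₀) * Real.exp (-(1/A)) := by ring
    rw [h3, hW]
    have h4 : A / B * (-B * C * Real.exp (1/A) / A) * Real.exp (-(1/A))
        = -C * (Real.exp (1/A) * Real.exp (-(1/A))) := by
      field_simp
    rw [h4, hE]; ring
  rw [h2]; ring
end

section
/- Let A ≠ 0, B ≠ 0, C ∈ ℝ, a = (1/B)·e^{W(-B·C·e^{1/A}/A) - 1/A} with B·a > 0, and f(y) = (A·y·ln(B·y) + y + C)·e^y. If W(-B·C·e^{1/A}/A) ≠ -1, then f'(a) = A·e^{a}·(W(-B·C·e^{1/A}/A) + 1) ≠ 0. -/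
/-!
Since `B·a = e^(W₀ - 1/A)`, we get `ln(B·a) = W₀ - 1/A`, and dividing the Lambert equation for `W₀`
by `B·e^(1/A)/A` turns it into `A·a·W₀ = -C`. Substituting both into `f'(a)` leaves `A·e^a·(W₀ + 1)`.
-/

open Real

theorem mul_mul_eq_neg_of_mul_exp_eq {A B C W₀ a : ℝ} (hA : A ≠ 0) (hB : B ≠ 0)
    (hW : W₀ * exp W₀ = -B * C * exp (1 / A) / A) (hBa : B * a = exp (W₀ - 1 / A)) :
    A * a * W₀ = -C := by
  have hBa' : B * a * exp (1 / A) = exp W₀ := by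
    rw [hBa, ← exp_add, sub_add_cancel]
  apply mul_left_cancel₀ hB
  apply mul_right_cancel₀ (exp_ne_zero (1 / A))
  field_simp at hW
  linear_combination A * W₀ * hBa' + hW

theorem deriv_eq_of_log_mul_eq {A B C W₀ a : ℝ} (hA : A ≠ 0)
    (hlog : log (B * a) = W₀ - 1 / A) (hkey : A * a * W₀ = -C) :
    (A * (a + 1) * log (B * a) + a + A + C + 1) * exp a = A * exp a * (W₀ + 1) := by
  rw [hlog]
  field_simp
  linear_combination hkey

theorem deriv_at_zero_nonzero_general (A B C W₀ : ℝ) (hA : A ≠ 0) (hB : B ≠ 0)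
    (hW : W₀ * Real.exp W₀ = -B * C * Real.exp (1 / A) / A) (hW1 : W₀ ≠ -1)
    (a : ℝ) (ha : a = (1 / B) * Real.exp (W₀ - 1 / A)) :
    (A * (a + 1) * Real.log (B * a) + a + A + C + 1) * Real.exp a =
        A * Real.exp a * (W₀ + 1) ∧
      A * Real.exp a * (W₀ + 1) ≠ 0 := by
  have hBa : B * a = exp (W₀ - 1 / A) := by
    rw [ha, ← mul_assoc, mul_one_div_cancel hB, one_mul]
  have hlog : log (B * a) = W₀ - 1 / A := by rw [hBa, log_exp]
  refine ⟨deriv_eq_of_log_mul_eq hA hlog (mul_mul_eq_neg_of_mul_exp_eq hA hB hW hBa), ?_⟩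
  have hW1' : W₀ + 1 ≠ 0 := fun h ↦ hW1 (eq_neg_of_add_eq_zero_left h)
  exact mul_ne_zero (mul_ne_zero hA (exp_ne_zero a)) hW1'

/-- Let `A ≠ 0`, `B ≠ 0`, `W₀` with `W₀·e^(W₀) = -B·C·e^(1/A)/A`,
`a = (1/B)·e^(W₀ - 1/A)` with `B·a > 0`, and `f'(y) =
(A·(y+1)·ln(B·y) + y + A + C + 1)·e^y`. If `W₀ ≠ -1` then
`f'(a) = A·e^a·(W₀ + 1) ≠ 0`. -/
theorem deriv_at_zero_nonzero (A B C W₀ : ℝ) (hA : A ≠ 0) (hB : B ≠ 0)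
    (hW : W₀ * Real.exp W₀ = -B * C * Real.exp (1 / A) / A) (hW1 : W₀ ≠ -1)
    (a : ℝ) (ha : a = (1 / B) * Real.exp (W₀ - 1 / A)) (hBa : 0 < B * a) :
    (A * (a + 1) * Real.log (B * a) + a + A + C + 1) * Real.exp a =
        A * Real.exp a * (W₀ + 1) ∧
      A * Real.exp a * (W₀ + 1) ≠ 0 :=
  deriv_at_zero_nonzero_general A B C W₀ hA hB hW hW1 a ha
end
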